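/- Let a, a' be real numbers with 0 ≤ a ≤ a'. Then s(a') ≤ (1 + (a' − a)/2) · s(a). -/

import Mathlib

/-!
Since `s(x + y) (1 + e^{-x}) (1 + e^{-y}) ≤ 2` is equivalent to `(1 - e^{-x}) (1 - e^{-y}) ≥ 0`,
we have `s(x + y) ≤ 2 s(x) s(y)` for `x, y ≥ 0`. Applied with `x = a` and `y = a' - a`, it reduces
the claim to `2 s(a' - a) ≤ 1 + (a' - a) / 2`, which holds because `s(0) = 1/2` and
`s' = s (1 - s) ≤ 1/4`.
-/

noncomputable def sigmoid (z : ℝ) : ℝ := 1 / (1 + Real.exp (-z))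

lemma Real.deriv_sigmoid_le (x : ℝ) : deriv Real.sigmoid x ≤ 1 / 4 := by
  rw [Real.deriv_sigmoid]
  nlinarith [sq_nonneg (Real.sigmoid x - 1 / 2)]

lemma Real.sigmoid_sub_sigmoid_le {x y : ℝ} (hxy : x ≤ y) :
    Real.sigmoid y - Real.sigmoid x ≤ (y - x) / 4 := by
  have h := image_sub_le_mul_sub_of_deriv_le differentiable_sigmoid Real.deriv_sigmoid_le hxy
  linarith

lemma Real.sigmoid_le_half_add {x : ℝ} (hx : 0 ≤ x) : Real.sigmoid x ≤ 1 / 2 + x / 4 := by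
  have h := Real.sigmoid_sub_sigmoid_le hx
  rw [Real.sigmoid_zero] at h
  linarith

lemma Real.sigmoid_add_le_two_mul_sigmoid_mul_sigmoid {x y : ℝ} (hx : 0 ≤ x) (hy : 0 ≤ y) :
    Real.sigmoid (x + y) ≤ 2 * Real.sigmoid x * Real.sigmoid y := by
  have hu : Real.exp (-x) ≤ 1 := Real.exp_le_one_iff.mpr (by linarith)
  have hv : Real.exp (-y) ≤ 1 := Real.exp_le_one_iff.mpr (by linarith)
  simp only [Real.sigmoid_def, neg_add, Real.exp_add]
  rw [← div_eq_mul_inv, ← div_eq_mul_inv, div_div, inv_eq_one_div,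
    div_le_div_iff₀ (by positivity) (by positivity)]
  nlinarith [mul_nonneg (sub_nonneg.mpr hu) (sub_nonneg.mpr hv)]

lemma sigmoid_eq_real_sigmoid : sigmoid = Real.sigmoid :=
  funext fun _ => one_div _

theorem sigmoid_le_one_add_half_gap_mul (a a' : ℝ) (ha : 0 ≤ a) (haa' : a ≤ a') :
    sigmoid a' ≤ (1 + (a' - a) / 2) * sigmoid a := by
  rw [sigmoid_eq_real_sigmoid]
  calc Real.sigmoid a' = Real.sigmoid (a + (a' - a)) := by rw [add_sub_cancel]
    _ ≤ 2 * Real.sigmoid a * Real.sigmoid (a' - a) :=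
      Real.sigmoid_add_le_two_mul_sigmoid_mul_sigmoid ha (sub_nonneg.mpr haa')
    _ ≤ 2 * Real.sigmoid a * (1 / 2 + (a' - a) / 4) := by
      gcongr
      · exact (mul_pos two_pos (Real.sigmoid_pos a)).le
      · exact Real.sigmoid_le_half_add (sub_nonneg.mpr haa')
    _ = (1 + (a' - a) / 2) * Real.sigmoid a := by ring
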